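/- If m, n, p ≥ 3, then every embedded cycle in the link graph L_{m,n,p} has length at least 6. -/

import Mathlib

/-- The generators of the presentation `I_{m,n,p}`:
`x, y, z`, the Artin generators `a, b, c`, and the extra generators
`d₃, …, d_m`, `e₃, …, e_n`, `f₃, …, f_p`. -/
inductive IGen (m n p : ℕ) where
  | x | y | z | a | b | c
  | d (i : Fin (m - 2))
  | e (i : Fin (n - 2))
  | f (i : Fin (p - 2))
deriving DecidableEq

/-- `dSeq m n p i` is `d_i` for `1 ≤ i ≤ m`, where `d₁ = a`, `d₂ = b`. -/
def dSeq (m n p : ℕ) (i : ℕ) : IGen m n p :=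
  if i = 1 then .a else if i = 2 then .b
  else if h : i - 3 < m - 2 then .d ⟨i - 3, h⟩ else .a

/-- `eSeq m n p i` is `e_i` for `1 ≤ i ≤ n`, where `e₁ = b`, `e₂ = c`. -/
def eSeq (m n p : ℕ) (i : ℕ) : IGen m n p :=
  if i = 1 then .b else if i = 2 then .c
  else if h : i - 3 < n - 2 then .e ⟨i - 3, h⟩ else .b

/-- `fSeq m n p i` is `f_i` for `1 ≤ i ≤ p`, where `f₁ = c`, `f₂ = a`. -/
def fSeq (m n p : ℕ) (i : ℕ) : IGen m n p :=
  if i = 1 then .c else if i = 2 then .a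
  else if h : i - 3 < p - 2 then .f ⟨i - 3, h⟩ else .c

/-- The triples `(w, g, h)` such that `w = g·h` is a relation of `I_{m,n,p}`. -/
def relTriples (m n p : ℕ) : Set (IGen m n p × IGen m n p × IGen m n p) :=
  {t | (∃ i : ℕ, 1 ≤ i ∧ i ≤ m ∧
          t = (.x, dSeq m n p i, dSeq m n p (i % m + 1))) ∨
       (∃ i : ℕ, 1 ≤ i ∧ i ≤ n ∧
          t = (.y, eSeq m n p i, eSeq m n p (i % n + 1))) ∨
       (∃ i : ℕ, 1 ≤ i ∧ i ≤ p ∧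
          t = (.z, fSeq m n p i, fSeq m n p (i % p + 1)))}

/-- Vertices of the link `L_{m,n,p}`: a pair of vertices for each generator of
`I_{m,n,p}`; the Boolean is `true` for the barred vertex (tail of the 1-cell)
and `false` for the unbarred vertex (head). -/
abbrev LinkVert (m n p : ℕ) := IGen m n p × Bool

/-- Each relation `w = g·h` (a triangular 2-cell) contributes to the link the three
corner edges `{ḡ, h}`, `{w, g}` and `{h̄, w̄}`. -/
def linkRel (m n p : ℕ) (u v : LinkVert m n p) : Prop :=
  ∃ t ∈ relTriples m n p,
    ((u, v) = ((t.2.1, true), (t.2.2, false)) ∨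
     (u, v) = ((t.1, false), (t.2.1, false)) ∨
     (u, v) = ((t.2.2, true), (t.1, true)))

/-- The link `L_{m,n,p}` of the unique 0-cell of the 2-complex `K_{m,n,p}`. -/
def Link (m n p : ℕ) : SimpleGraph (LinkVert m n p) :=
  SimpleGraph.fromRel (linkRel m n p)

/-- The level of a vertex of the link: `x̄, ȳ, z̄` at level 1; barred generators at
level 2; unbarred generators at level 3; `x, y, z` at level 4. -/
def lvl {m n p : ℕ} : LinkVert m n p → ℕ
  | (.x, true) => 1 | (.y, true) => 1 | (.z, true) => 1
  | (.x, false) => 4 | (.y, false) => 4 | (.z, false) => 4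
  | (_, true) => 2
  | (_, false) => 3


/-!
The levels `1, …, 4` of adjacent vertices of the link have different parities, so every cycle
has even length and it suffices to rule out 4-cycles. In a 4-cycle two opposite vertices are
generator vertices `(g, β)`, `(g', β)` with two common neighbours. Unwinding the three kinds of
corner edges, this means one of five coincidences among the relations `w = g h`: two relators
sharing two first (or two last) factors, two letters with the same two successors, or two
successors (predecessors) of one letter that are first (last) factors of a common relator. In
`I_{m,n,p}` the only letters lying in two of the cyclic words `d₁ ⋯ d_m`, `e₁ ⋯ e_n`, `f₁ ⋯ f_p`
are `a`, `b`, `c`, and their neighbours in these words are pairwise distinct, which excludes all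
five.
-/

namespace SimpleGraph

variable {V : Type*} {G : SimpleGraph V}

theorem Walk.IsCycle.six_le_length (col : G.Coloring Bool)
    (hsq : ∀ ⦃a b c d⦄, G.Adj a b → G.Adj b c → G.Adj c d → G.Adj d a → a ≠ c → b ≠ d → False)
    {u : V} {p : G.Walk u u} (hp : p.IsCycle) : 6 ≤ p.length := by
  have h3 := hp.three_le_length
  obtain ⟨k, hk⟩ : Even p.length := (col.even_length_iff_congr p).mpr Iff.rfl
  have h4 : p.length ≠ 4 := by
    intro h4
    have hinj := hp.getVert_injOn'
    have adj (i : ℕ) (hi : i < 4) := p.adj_getVert_succ (i := i) (by omega)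
    refine hsq (adj 0 (by norm_num)) (adj 1 (by norm_num)) (adj 2 (by norm_num)) ?_ ?_ ?_
    · simpa [← h4, p.getVert_length] using adj 3 (by norm_num)
    · exact fun h => absurd (hinj (by simp [h4]) (by simp [h4]) h) (by norm_num)
    · exact fun h => absurd (hinj (by simp [h4]) (by simp [h4]) h) (by norm_num)
  omega

end SimpleGraph

namespace TriangleLink

variable {α : Type*}

/-- The link of the vertex of the presentation complex whose relations are the `w = g h` with
`(w, g, h) ∈ R`; in particular `Link m n p = link (relTriples m n p)`. -/
def link (R : Set (α × α × α)) : SimpleGraph (α × Bool) :=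
  SimpleGraph.fromRel fun u v => ∃ t ∈ R,
    ((u, v) = ((t.2.1, true), (t.2.2, false)) ∨
     (u, v) = ((t.1, false), (t.2.1, false)) ∨
     (u, v) = ((t.2.2, true), (t.1, true)))

variable (R : Set (α × α × α))

def Precedes (g h : α) : Prop := ∃ w, (w, g, h) ∈ R

def IsFirstFactor (w g : α) : Prop := ∃ h, (w, g, h) ∈ R

def IsLastFactor (w h : α) : Prop := ∃ g, (w, g, h) ∈ R

/-- `P` marks the letters `w` occurring only as left-hand sides of the relations `w = g h`; each
other field rules out one kind of 4-cycle in `link R`. -/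
structure SquareFree (P : α → Bool) : Prop where
  separated : ∀ t ∈ R, P t.1 ∧ ¬P t.2.1 ∧ ¬P t.2.2
  isFirstFactor {w w' g g' : α} : IsFirstFactor R w g → IsFirstFactor R w g' →
    IsFirstFactor R w' g → IsFirstFactor R w' g' → w = w' ∨ g = g'
  isLastFactor {w w' h h' : α} : IsLastFactor R w h → IsLastFactor R w h' →
    IsLastFactor R w' h → IsLastFactor R w' h' → w = w' ∨ h = h'
  precedes {g g' h h' : α} : Precedes R g h → Precedes R g h' →
    Precedes R g' h → Precedes R g' h' → g = g' ∨ h = h'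
  precedes_isFirstFactor {g h h' w : α} : Precedes R g h → Precedes R g h' →
    IsFirstFactor R w h → IsFirstFactor R w h' → h = h'
  isLastFactor_precedes {g g' h w : α} : IsLastFactor R w g → IsLastFactor R w g' →
    Precedes R g h → Precedes R g' h → g = g'

variable {R} {P : α → Bool}

/-- Colours a vertex by the parity of its level `lvl` in the link. -/
def parityColoring (hR : ∀ t ∈ R, P t.1 ∧ ¬P t.2.1 ∧ ¬P t.2.2) : (link R).Coloring Bool :=
  SimpleGraph.Coloring.mk (fun v => xor (P v.1) v.2) <| by
    rintro u v ⟨-, ⟨t, ht, h⟩ | ⟨t, ht, h⟩⟩ <;>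
      obtain ⟨h1, h2, h3⟩ := hR t ht <;>
      rcases h with h | h | h <;> obtain ⟨rfl, rfl⟩ := Prod.ext_iff.mp h <;> simp_all

theorem not_of_adj_of_marked (hR : ∀ t ∈ R, P t.1 ∧ ¬P t.2.1 ∧ ¬P t.2.2) {w : α}
    {β : Bool} {v : α × Bool} (hw : P w) (h : (link R).Adj (w, β) v) : ¬P v.1 := by
  rw [link, SimpleGraph.fromRel_adj] at h
  obtain ⟨-, ⟨t, ht, h⟩ | ⟨t, ht, h⟩⟩ := h <;> obtain ⟨h1, h2, h3⟩ := hR t ht <;>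
    rcases h with h | h | h <;> simp only [Prod.mk.injEq] at h <;> simp_all

theorem adj_barred_cases (hR : ∀ t ∈ R, P t.1 ∧ ¬P t.2.1 ∧ ¬P t.2.2) {g : α}
    {v : α × Bool} (hg : ¬P g) (h : (link R).Adj (g, true) v) :
    (∃ h, Precedes R g h ∧ v = (h, false)) ∨ (∃ w, IsLastFactor R w g ∧ v = (w, true)) := by
  rw [link, SimpleGraph.fromRel_adj] at h
  obtain ⟨-, ⟨⟨w, g', h'⟩, ht, h⟩ | ⟨⟨w, g', h'⟩, ht, h⟩⟩ := h <;>
    rcases h with h | h | h <;>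
    simp only [Prod.mk.injEq, reduceCtorEq, and_false, false_and] at h
  · obtain ⟨⟨rfl, -⟩, rfl⟩ := h
    exact Or.inl ⟨h', ⟨w, ht⟩, rfl⟩
  · obtain ⟨⟨rfl, -⟩, rfl⟩ := h
    exact Or.inr ⟨w, ⟨g', ht⟩, rfl⟩
  · exact absurd (h.2.1 ▸ (hR _ ht).1) hg

theorem adj_unbarred_cases (hR : ∀ t ∈ R, P t.1 ∧ ¬P t.2.1 ∧ ¬P t.2.2) {h : α}
    {v : α × Bool} (hh : ¬P h) (hadj : (link R).Adj (h, false) v) :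
    (∃ g, Precedes R g h ∧ v = (g, true)) ∨ (∃ w, IsFirstFactor R w h ∧ v = (w, false)) := by
  rw [link, SimpleGraph.fromRel_adj] at hadj
  obtain ⟨-, ⟨⟨w, g', h'⟩, ht, e⟩ | ⟨⟨w, g', h'⟩, ht, e⟩⟩ := hadj <;>
    rcases e with e | e | e <;>
    simp only [Prod.mk.injEq, reduceCtorEq, and_false, false_and] at e
  · exact absurd (e.1.1 ▸ (hR _ ht).1) hh
  · obtain ⟨rfl, ⟨rfl, -⟩⟩ := e
    exact Or.inl ⟨g', ⟨w, ht⟩, rfl⟩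
  · obtain ⟨rfl, ⟨rfl, -⟩⟩ := e
    exact Or.inr ⟨w, ⟨h', ht⟩, rfl⟩

namespace SquareFree

theorem eq_or_eq_of_adj_barred (hS : SquareFree R P) {g g' : α} {v v' : α × Bool} (hg : ¬P g)
    (hg' : ¬P g') (h₁ : (link R).Adj (g, true) v) (h₂ : (link R).Adj (g', true) v)
    (h₃ : (link R).Adj (g, true) v') (h₄ : (link R).Adj (g', true) v') : g = g' ∨ v = v' := by
  rcases adj_barred_cases hS.separated hg h₁ with ⟨h, p₁, rfl⟩ | ⟨w, l₁, rfl⟩ <;>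
    rcases adj_barred_cases hS.separated hg h₃ with ⟨h', p₃, rfl⟩ | ⟨w', l₃, rfl⟩ <;>
    rcases adj_barred_cases hS.separated hg' h₂ with ⟨_, p₂, e₂⟩ | ⟨_, l₂, e₂⟩ <;>
    rcases adj_barred_cases hS.separated hg' h₄ with ⟨_, p₄, e₄⟩ | ⟨_, l₄, e₄⟩ <;>
    simp only [Prod.mk.injEq, reduceCtorEq, and_false, and_true] at e₂ e₄ <;>
    subst e₂ e₄
  · simpa using hS.precedes p₁ p₃ p₂ p₄
  · exact Or.inl (hS.isLastFactor_precedes l₃ l₄ p₁ p₂)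
  · exact Or.inl (hS.isLastFactor_precedes l₁ l₂ p₃ p₄)
  · simpa [or_comm] using hS.isLastFactor l₁ l₂ l₃ l₄

theorem eq_or_eq_of_adj_unbarred (hS : SquareFree R P) {h h' : α} {v v' : α × Bool} (hh : ¬P h)
    (hh' : ¬P h') (h₁ : (link R).Adj (h, false) v) (h₂ : (link R).Adj (h', false) v)
    (h₃ : (link R).Adj (h, false) v') (h₄ : (link R).Adj (h', false) v') : h = h' ∨ v = v' := by
  rcases adj_unbarred_cases hS.separated hh h₁ with ⟨g, p₁, rfl⟩ | ⟨w, f₁, rfl⟩ <;>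
    rcases adj_unbarred_cases hS.separated hh h₃ with ⟨g', p₃, rfl⟩ | ⟨w', f₃, rfl⟩ <;>
    rcases adj_unbarred_cases hS.separated hh' h₂ with ⟨_, p₂, e₂⟩ | ⟨_, f₂, e₂⟩ <;>
    rcases adj_unbarred_cases hS.separated hh' h₄ with ⟨_, p₄, e₄⟩ | ⟨_, f₄, e₄⟩ <;>
    simp only [Prod.mk.injEq, reduceCtorEq, and_false, and_true] at e₂ e₄ <;>
    subst e₂ e₄
  · simpa [or_comm] using hS.precedes p₁ p₂ p₃ p₄
  · exact Or.inl (hS.precedes_isFirstFactor p₁ p₂ f₃ f₄)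
  · exact Or.inl (hS.precedes_isFirstFactor p₃ p₄ f₁ f₂)
  · simpa [or_comm] using hS.isFirstFactor f₁ f₂ f₃ f₄

theorem false_of_square_of_unmarked (hS : SquareFree R P) {a b c d : α × Bool} (hb : ¬P b.1)
    (hd : ¬P d.1) (hab : (link R).Adj a b) (hbc : (link R).Adj b c) (hcd : (link R).Adj c d)
    (hda : (link R).Adj d a) (hac : a ≠ c) (hbd : b ≠ d) : False := by
  have hcol : xor (P b.1) b.2 = xor (P d.1) d.2 :=
    let col := parityColoring hS.separated
    (Bool.eq_not_of_ne (col.valid hbc)).trans (Bool.eq_not_of_ne (col.valid hcd.symm)).symm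
  obtain ⟨g, β⟩ := b
  obtain ⟨g', β'⟩ := d
  obtain rfl : β = β' := by simpa [hb, hd] using hcol
  cases β
  · rcases hS.eq_or_eq_of_adj_unbarred hb hd hab.symm hda hbc hcd.symm with rfl | rfl
    exacts [hbd rfl, hac rfl]
  · rcases hS.eq_or_eq_of_adj_barred hb hd hab.symm hda hbc hcd.symm with rfl | rfl
    exacts [hbd rfl, hac rfl]

theorem false_of_square (hS : SquareFree R P) {a b c d : α × Bool} (hab : (link R).Adj a b)
    (hbc : (link R).Adj b c) (hcd : (link R).Adj c d) (hda : (link R).Adj d a) (hac : a ≠ c)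
    (hbd : b ≠ d) : False := by
  by_cases ha : P a.1
  · exact hS.false_of_square_of_unmarked (not_of_adj_of_marked hS.separated ha hab)
      (not_of_adj_of_marked hS.separated ha hda.symm) hab hbc hcd hda hac hbd
  by_cases hc : P c.1
  · exact hS.false_of_square_of_unmarked (not_of_adj_of_marked hS.separated hc hbc.symm)
      (not_of_adj_of_marked hS.separated hc hcd) hab hbc hcd hda hac hbd
  exact hS.false_of_square_of_unmarked hc ha hbc hcd hda hab hbd hac.symm

theorem six_le_length (hS : SquareFree R P) {u : α × Bool} {p : (link R).Walk u u}
    (hp : p.IsCycle) : 6 ≤ p.length :=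
  hp.six_le_length (parityColoring hS.separated) fun _ _ _ _ => hS.false_of_square

end SquareFree

end TriangleLink

/-- Consecutive letters `(g, h)` of the cyclic word `u v f₀ ⋯ f_{k-1}`. -/
def CyclicStep {α : Type*} (u v : α) {k : ℕ} (f : Fin k → α) (g h : α) : Prop :=
  (g, h) = (u, v) ∨ (∃ j, j.val = 0 ∧ (g, h) = (v, f j)) ∨
    (∃ j j', j'.val = j.val + 1 ∧ (g, h) = (f j, f j')) ∨ (∃ j, j.val + 1 = k ∧ (g, h) = (f j, u))

theorem cyclicStep_of_le {α : Type*} {u v : α} {k i : ℕ} {f : Fin (k - 2) → α} (hk : 3 ≤ k)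
    (hi : 1 ≤ i) (hik : i ≤ k) :
    let s := fun i => if i = 1 then u else if i = 2 then v
      else if h : i - 3 < k - 2 then f ⟨i - 3, h⟩ else u
    CyclicStep u v f (s i) (s (i % k + 1)) := by
  intro s
  rcases Nat.lt_or_ge i k with hlt | hge
  · rw [Nat.mod_eq_of_lt hlt]
    rcases (by omega : i = 1 ∨ i = 2 ∨ 3 ≤ i) with rfl | rfl | h3
    · left; simp [s]
    · right; left
      exact ⟨⟨0, by omega⟩, rfl, by simp [s, show 0 < k - 2 by omega]⟩
    · right; right; left
      refine ⟨⟨i - 3, by omega⟩, ⟨i - 2, by omega⟩, by simp only; omega, ?_⟩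
      simp only [s, if_neg (show i ≠ 1 by omega), if_neg (show i ≠ 2 by omega),
        if_neg (show i + 1 ≠ 1 by omega), if_neg (show i + 1 ≠ 2 by omega),
        dif_pos (show i - 3 < k - 2 by omega), dif_pos (show i + 1 - 3 < k - 2 by omega)]
      rfl
  · obtain rfl : i = k := by omega
    right; right; right
    refine ⟨⟨i - 3, by omega⟩, by simp only; omega, ?_⟩
    simp [s, Nat.mod_self, show i ≠ 1 by omega, show i ≠ 2 by omega, show i - 3 < i - 2 by omega]

namespace IGen

open TriangleLink

variable {m n p : ℕ}

theorem cyclicStep_of_mem_relTriples (hm : 3 ≤ m) (hn : 3 ≤ n) (hp : 3 ≤ p) {w g h : IGen m n p}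
    (ht : (w, g, h) ∈ relTriples m n p) :
    (w = x ∧ CyclicStep a b d g h) ∨ (w = y ∧ CyclicStep b c e g h) ∨
      (w = z ∧ CyclicStep c a f g h) := by
  rcases ht with ⟨i, h1, h2, ht⟩ | ⟨i, h1, h2, ht⟩ | ⟨i, h1, h2, ht⟩ <;>
    simp only [Prod.mk.injEq] at ht <;> obtain ⟨rfl, rfl, rfl⟩ := ht
  · exact Or.inl ⟨rfl, cyclicStep_of_le hm h1 h2⟩
  · exact Or.inr (Or.inl ⟨rfl, cyclicStep_of_le hn h1 h2⟩)
  · exact Or.inr (Or.inr ⟨rfl, cyclicStep_of_le hp h1 h2⟩)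

def isXYZ : IGen m n p → Bool
  | x | y | z => true
  | _ => false

def Occurs : IGen m n p → IGen m n p → Prop
  | x, a | x, b | x, d _ => True
  | y, b | y, c | y, e _ => True
  | z, c | z, a | z, f _ => True
  | _, _ => False

theorem Occurs.isXYZ {w g : IGen m n p} (h : Occurs w g) : w.isXYZ ∧ ¬g.isXYZ := by
  cases w <;> cases g <;> simp_all [Occurs, IGen.isXYZ]

theorem Occurs.eq_or_eq {w w' g g' : IGen m n p} (h₁ : Occurs w g) (h₂ : Occurs w g')
    (h₃ : Occurs w' g) (h₄ : Occurs w' g') : w = w' ∨ g = g' := by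
  cases w <;> cases w' <;> cases g <;> simp_all [Occurs] <;> cases g' <;> simp_all

theorem occurs_of_mem_relTriples (hm : 3 ≤ m) (hn : 3 ≤ n) (hp : 3 ≤ p) {w g h : IGen m n p}
    (ht : (w, g, h) ∈ relTriples m n p) : Occurs w g ∧ Occurs w h := by
  rcases cyclicStep_of_mem_relTriples hm hn hp ht with ⟨rfl, H⟩ | ⟨rfl, H⟩ | ⟨rfl, H⟩ <;>
    rcases H with H | ⟨j, -, H⟩ | ⟨j, j', -, H⟩ | ⟨j, -, H⟩ <;>
    simp only [Prod.mk.injEq] at H <;> obtain ⟨rfl, rfl⟩ := H <;> simp [Occurs]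

theorem distinct_successors (hm : 3 ≤ m) (hn : 3 ≤ n) (hp : 3 ≤ p) {g h h' : IGen m n p}
    (h₁ : Precedes (relTriples m n p) g h) (h₂ : Precedes (relTriples m n p) g h') (hh : h ≠ h') :
    (g = a ∧ (h = b ∧ h' = f ⟨0, by omega⟩ ∨ h = f ⟨0, by omega⟩ ∧ h' = b)) ∨
    (g = b ∧ (h = d ⟨0, by omega⟩ ∧ h' = c ∨ h = c ∧ h' = d ⟨0, by omega⟩)) ∨
    (g = c ∧ (h = e ⟨0, by omega⟩ ∧ h' = a ∨ h = a ∧ h' = e ⟨0, by omega⟩)) := by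
  obtain ⟨w, ht⟩ := h₁
  obtain ⟨w', ht'⟩ := h₂
  rcases cyclicStep_of_mem_relTriples hm hn hp ht with ⟨rfl, H⟩ | ⟨rfl, H⟩ | ⟨rfl, H⟩ <;>
    rcases H with H | ⟨j, hj, H⟩ | ⟨j, k, hj, H⟩ | ⟨j, hj, H⟩ <;>
    simp only [Prod.mk.injEq] at H <;> obtain ⟨rfl, rfl⟩ := H <;>
    rcases cyclicStep_of_mem_relTriples hm hn hp ht' with ⟨rfl, H⟩ | ⟨rfl, H⟩ | ⟨rfl, H⟩ <;>
    rcases H with H | ⟨j', hj', H⟩ | ⟨j', k', hj', H⟩ | ⟨j', hj', H⟩ <;>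
    simp only [Prod.mk.injEq] at H <;> obtain ⟨H, rfl⟩ := H <;>
    simp_all [Fin.ext_iff] <;> omega

theorem distinct_predecessors (hm : 3 ≤ m) (hn : 3 ≤ n) (hp : 3 ≤ p) {g g' h : IGen m n p}
    (h₁ : Precedes (relTriples m n p) g h) (h₂ : Precedes (relTriples m n p) g' h) (hg : g ≠ g') :
    (h = a ∧ (g = c ∧ g' = d ⟨m - 3, by omega⟩ ∨ g = d ⟨m - 3, by omega⟩ ∧ g' = c)) ∨
    (h = b ∧ (g = a ∧ g' = e ⟨n - 3, by omega⟩ ∨ g = e ⟨n - 3, by omega⟩ ∧ g' = a)) ∨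
    (h = c ∧ (g = b ∧ g' = f ⟨p - 3, by omega⟩ ∨ g = f ⟨p - 3, by omega⟩ ∧ g' = b)) := by
  obtain ⟨w, ht⟩ := h₁
  obtain ⟨w', ht'⟩ := h₂
  rcases cyclicStep_of_mem_relTriples hm hn hp ht with ⟨rfl, H⟩ | ⟨rfl, H⟩ | ⟨rfl, H⟩ <;>
    rcases H with H | ⟨j, hj, H⟩ | ⟨j, k, hj, H⟩ | ⟨j, hj, H⟩ <;>
    simp only [Prod.mk.injEq] at H <;> obtain ⟨rfl, rfl⟩ := H <;>
    rcases cyclicStep_of_mem_relTriples hm hn hp ht' with ⟨rfl, H⟩ | ⟨rfl, H⟩ | ⟨rfl, H⟩ <;>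
    rcases H with H | ⟨j', hj', H⟩ | ⟨j', k', hj', H⟩ | ⟨j', hj', H⟩ <;>
    simp only [Prod.mk.injEq] at H <;> obtain ⟨rfl, H⟩ := H <;>
    simp_all [Fin.ext_iff] <;> omega

theorem squareFree_relTriples (hm : 3 ≤ m) (hn : 3 ≤ n) (hp : 3 ≤ p) :
    SquareFree (relTriples m n p) isXYZ where
  separated := fun ⟨_, _, _⟩ ht =>
    have ⟨hg, hh⟩ := occurs_of_mem_relTriples hm hn hp ht
    ⟨hg.isXYZ.1, hg.isXYZ.2, hh.isXYZ.2⟩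
  isFirstFactor := fun ⟨_, h₁⟩ ⟨_, h₂⟩ ⟨_, h₃⟩ ⟨_, h₄⟩ =>
    Occurs.eq_or_eq (occurs_of_mem_relTriples hm hn hp h₁).1
      (occurs_of_mem_relTriples hm hn hp h₂).1 (occurs_of_mem_relTriples hm hn hp h₃).1
      (occurs_of_mem_relTriples hm hn hp h₄).1
  isLastFactor := fun ⟨_, h₁⟩ ⟨_, h₂⟩ ⟨_, h₃⟩ ⟨_, h₄⟩ =>
    Occurs.eq_or_eq (occurs_of_mem_relTriples hm hn hp h₁).2
      (occurs_of_mem_relTriples hm hn hp h₂).2 (occurs_of_mem_relTriples hm hn hp h₃).2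
      (occurs_of_mem_relTriples hm hn hp h₄).2
  precedes h₁ h₂ h₃ h₄ := by
    by_contra! hne
    rcases distinct_successors hm hn hp h₁ h₂ hne.2 with ⟨rfl, ⟨rfl, rfl⟩ | ⟨rfl, rfl⟩⟩ |
      ⟨rfl, ⟨rfl, rfl⟩ | ⟨rfl, rfl⟩⟩ | ⟨rfl, ⟨rfl, rfl⟩ | ⟨rfl, rfl⟩⟩ <;>
      rcases distinct_successors hm hn hp h₃ h₄ hne.2 with ⟨rfl, H⟩ | ⟨rfl, H⟩ | ⟨rfl, H⟩ <;>
      simp_all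
  precedes_isFirstFactor {g h h' w} h₁ h₂ := fun ⟨_, h₃⟩ ⟨_, h₄⟩ => by
    by_contra hne
    have o₁ := (occurs_of_mem_relTriples hm hn hp h₃).1
    have o₂ := (occurs_of_mem_relTriples hm hn hp h₄).1
    rcases distinct_successors hm hn hp h₁ h₂ hne with ⟨-, ⟨rfl, rfl⟩ | ⟨rfl, rfl⟩⟩ |
      ⟨-, ⟨rfl, rfl⟩ | ⟨rfl, rfl⟩⟩ | ⟨-, ⟨rfl, rfl⟩ | ⟨rfl, rfl⟩⟩ <;>
      cases w <;> simp [Occurs] at o₁ o₂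
  isLastFactor_precedes {g g' h w} := fun ⟨_, h₁⟩ ⟨_, h₂⟩ h₃ h₄ => by
    by_contra hne
    have o₁ := (occurs_of_mem_relTriples hm hn hp h₁).2
    have o₂ := (occurs_of_mem_relTriples hm hn hp h₂).2
    rcases distinct_predecessors hm hn hp h₃ h₄ hne with ⟨-, ⟨rfl, rfl⟩ | ⟨rfl, rfl⟩⟩ |
      ⟨-, ⟨rfl, rfl⟩ | ⟨rfl, rfl⟩⟩ | ⟨-, ⟨rfl, rfl⟩ | ⟨rfl, rfl⟩⟩ <;>
      cases w <;> simp [Occurs] at o₁ o₂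

end IGen

/-- If `m, n, p ≥ 3`, then every embedded cycle in the link graph
`L_{m,n,p}` has length at least 6. -/
theorem link_girth_ge_six (m n p : ℕ) (hm : 3 ≤ m) (hn : 3 ≤ n) (hp : 3 ≤ p) :
    ∀ (v : LinkVert m n p) (w : (Link m n p).Walk v v), w.IsCycle → 6 ≤ w.length :=
  fun _ _ hw => (IGen.squareFree_relTriples hm hn hp).six_le_length hw
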